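/- Let f: ℝⁿ → ℝ be differentiable at x ∈ ℝⁿ, let B > 0, and let g be a random vector in ℝⁿ with E[g] = ∇f(x) and E[‖g‖₂²] ≤ B. Let Q be a random map on ℝⁿ whose randomness is independent of g and such that, conditionally on g = w for any nonzero w, Q(w) is distributed as the stochastic quantization Q_s(w) (and Q(0) = 0). Then E[Q(g)] = ∇f(x) and E[‖Q(g) − ∇f(x)‖₂²] ≤ (1 + min(n/s², √n/s)) · B. In particular, Q(g) is again a stochastic gradient for f at x. -/

import Mathlib

/-!
Each coordinate of `Q_s(w)` is `‖w‖ sgn(wᵢ) ξᵢ`, where `ξᵢ` is a two-point variable on the grid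
`(1/s)ℤ` with mean `aᵢ = |wᵢ|/‖w‖` and variance `pᵢ(1 - pᵢ)/s² ≤ min(1/s², aᵢ/s)`. Hence `Q_s(w)`
is unbiased and, since `∑ aᵢ² = 1` and `∑ aᵢ ≤ √n` by Cauchy–Schwarz,
`E‖Q_s(w)‖² ≤ (1 + min(n/s², √n/s)) ‖w‖²`. Integrating first over the quantization randomness
(Fubini on `Ω × Ω'`) transfers both facts to `Q(g)`, and
`E‖Q(g) - ∇f(x)‖² = E‖Q(g)‖² - ‖∇f(x)‖² ≤ E‖Q(g)‖²`.
-/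

open MeasureTheory ProbabilityTheory

/-- `Qv` is (a realization on the probability space `(Ω, μ)` of) the stochastic
quantization `Q_s(v)` of the nonzero vector `v ∈ ℝⁿ` with `s` quantization levels:
`Q_s(v)_i = ‖v‖₂ · sgn(vᵢ) · ξᵢ`, where the `ξᵢ` are independent, and, with
`aᵢ = |vᵢ|/‖v‖₂` and `ℓᵢ ∈ {0, …, s−1}` such that `aᵢ ∈ [ℓᵢ/s, (ℓᵢ+1)/s]`, `ξᵢ` takes
the value `(ℓᵢ+1)/s` with probability `pᵢ = aᵢ·s − ℓᵢ` and `ℓᵢ/s` with probability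
`1 − pᵢ`. -/
def IsStochQuant {n : ℕ} (s : ℕ) {Ω : Type*} [MeasurableSpace Ω] (μ : Measure Ω)
    (v : EuclideanSpace ℝ (Fin n)) (Qv : Ω → EuclideanSpace ℝ (Fin n)) : Prop :=
  ∃ (ξ : Fin n → Ω → ℝ) (ℓ : Fin n → ℕ),
    (∀ i, Measurable (ξ i)) ∧
    iIndepFun ξ μ ∧
    (∀ i, ℓ i ≤ s - 1) ∧
    (∀ i, (ℓ i : ℝ) / s ≤ |v i| / ‖v‖ ∧ |v i| / ‖v‖ ≤ ((ℓ i : ℝ) + 1) / s) ∧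
    (∀ i, μ {ω | ξ i ω = ((ℓ i : ℝ) + 1) / s} =
        ENNReal.ofReal (|v i| / ‖v‖ * s - ℓ i)) ∧
    (∀ i, μ {ω | ξ i ω = (ℓ i : ℝ) / s} =
        1 - ENNReal.ofReal (|v i| / ‖v‖ * s - ℓ i)) ∧
    (∀ ω i, Qv ω i = ‖v‖ * (if 0 ≤ v i then (1 : ℝ) else -1) * ξ i ω)

section TwoPoint

variable {Ω : Type*} [MeasurableSpace Ω]

structure IsTwoPoint (μ : Measure Ω) (ξ : Ω → ℝ) (lo hi p : ℝ) : Prop where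
  measurable : Measurable ξ
  lo_ne_hi : lo ≠ hi
  nonneg : 0 ≤ p
  le_one : p ≤ 1
  measure_hi : μ {ω | ξ ω = hi} = ENNReal.ofReal p
  measure_lo : μ {ω | ξ ω = lo} = 1 - ENNReal.ofReal p

namespace IsTwoPoint

variable {μ : Measure Ω} {ξ : Ω → ℝ} {lo hi p s ℓ a : ℝ}

lemma measurableSet_eq (h : IsTwoPoint μ ξ lo hi p) (c : ℝ) : MeasurableSet {ω | ξ ω = c} :=
  h.measurable (measurableSet_singleton c)

lemma of_grid (hs : 0 < s) (hξ : Measurable ξ) (ha : ℓ / s ≤ a ∧ a ≤ (ℓ + 1) / s)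
    (hhi : μ {ω | ξ ω = (ℓ + 1) / s} = ENNReal.ofReal (a * s - ℓ))
    (hlo : μ {ω | ξ ω = ℓ / s} = 1 - ENNReal.ofReal (a * s - ℓ)) :
    IsTwoPoint μ ξ (ℓ / s) ((ℓ + 1) / s) (a * s - ℓ) where
  measurable := hξ
  lo_ne_hi := by
    rw [Ne, div_eq_div_iff hs.ne' hs.ne']
    intro h; nlinarith
  nonneg := by have := ha.1; rw [div_le_iff₀ hs] at this; linarith
  le_one := by have := ha.2; rw [le_div_iff₀ hs] at this; linarith
  measure_hi := hhi
  measure_lo := hlo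

variable [IsProbabilityMeasure μ]

lemma ae_eq_or_eq (h : IsTwoPoint μ ξ lo hi p) : ∀ᵐ ω ∂μ, ξ ω = hi ∨ ξ ω = lo := by
  have hdisj : Disjoint {ω | ξ ω = hi} {ω | ξ ω = lo} :=
    Set.disjoint_left.2 fun ω h₁ h₂ => h.lo_ne_hi (h₂.symm.trans h₁)
  have hset : MeasurableSet {ω | ξ ω = hi ∨ ξ ω = lo} := by
    rw [Set.ofPred_or]; exact (h.measurableSet_eq hi).union (h.measurableSet_eq lo)
  refine (ae_iff_measure_eq hset.nullMeasurableSet).2 ?_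
  rw [Set.ofPred_or, measure_union hdisj (h.measurableSet_eq lo), h.measure_hi, h.measure_lo,
    add_tsub_cancel_of_le (ENNReal.ofReal_le_one.2 h.le_one), measure_univ]

lemma comp_ae_eq (h : IsTwoPoint μ ξ lo hi p) (φ : ℝ → ℝ) :
    (fun ω => φ (ξ ω)) =ᵐ[μ]
      {ω | ξ ω = hi}.indicator (fun _ => φ hi) + {ω | ξ ω = lo}.indicator (fun _ => φ lo) := by
  filter_upwards [h.ae_eq_or_eq] with ω hω
  rcases hω with hω | hω
  · simp [hω, h.lo_ne_hi.symm]
  · simp [hω, h.lo_ne_hi]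

lemma integrable_comp (h : IsTwoPoint μ ξ lo hi p) (φ : ℝ → ℝ) :
    Integrable (fun ω => φ (ξ ω)) μ :=
  (((integrable_const _).indicator (h.measurableSet_eq hi)).add
    ((integrable_const _).indicator (h.measurableSet_eq lo))).congr (h.comp_ae_eq φ).symm

lemma integral_comp (h : IsTwoPoint μ ξ lo hi p) (φ : ℝ → ℝ) :
    ∫ ω, φ (ξ ω) ∂μ = p * φ hi + (1 - p) * φ lo := by
  rw [integral_congr_ae (h.comp_ae_eq φ), integral_add'
    ((integrable_const _).indicator (h.measurableSet_eq hi))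
    ((integrable_const _).indicator (h.measurableSet_eq lo)),
    integral_indicator_const _ (h.measurableSet_eq hi),
    integral_indicator_const _ (h.measurableSet_eq lo), measureReal_def, measureReal_def,
    h.measure_hi, h.measure_lo, ENNReal.toReal_sub_of_le (ENNReal.ofReal_le_one.2 h.le_one)
    ENNReal.one_ne_top, ENNReal.toReal_ofReal h.nonneg]
  simp [smul_eq_mul]

lemma integral_eq_of_grid (h : IsTwoPoint μ ξ (ℓ / s) ((ℓ + 1) / s) (a * s - ℓ)) (hs : s ≠ 0) :
    ∫ ω, ξ ω ∂μ = a := by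
  refine (h.integral_comp id).trans ?_
  simp only [id]
  field_simp
  ring

lemma integral_sq_le_of_grid (h : IsTwoPoint μ ξ (ℓ / s) ((ℓ + 1) / s) (a * s - ℓ)) (hs : 0 < s)
    (hℓ : 0 ≤ ℓ) : ∫ ω, ξ ω ^ 2 ∂μ ≤ a ^ 2 + min (1 / s ^ 2) (a / s) := by
  set p := a * s - ℓ with hp
  have hvar : ∫ ω, ξ ω ^ 2 ∂μ = a ^ 2 + p * (1 - p) / s ^ 2 := by
    rw [h.integral_comp (· ^ 2)]
    field_simp
    ring
  have hp₀ := h.nonneg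
  have hp₁ := h.le_one
  rw [hvar, add_le_add_iff_left]
  refine le_min ?_ ?_
  · gcongr
    nlinarith
  · calc p * (1 - p) / s ^ 2 ≤ a * s / s ^ 2 :=
        div_le_div_of_nonneg_right (by nlinarith) (by positivity)
      _ = a / s := by field_simp

end IsTwoPoint
end TwoPoint

section Euclidean

variable {ι : Type*} [Fintype ι]

lemma EuclideanSpace.sum_abs_le_sqrt_card_mul_norm (x : EuclideanSpace ℝ ι) :
    ∑ i, |x i| ≤ Real.sqrt (Fintype.card ι) * ‖x‖ := by
  rw [← Real.sqrt_sq (norm_nonneg x), ← Real.sqrt_mul (Nat.cast_nonneg _),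
    Real.le_sqrt (Finset.sum_nonneg fun i _ => abs_nonneg _) (by positivity),
    EuclideanSpace.norm_sq_eq]
  simpa using sq_sum_le_card_mul_sum_sq (s := Finset.univ) (f := fun i => |x i|)

lemma EuclideanSpace.norm_sq_eq_of_apply_eq_mul {x : EuclideanSpace ℝ ι} {r : ℝ} {σ y : ι → ℝ}
    (hσ : ∀ i, σ i ^ 2 = 1) (hx : ∀ i, x i = r * σ i * y i) :
    ‖x‖ ^ 2 = r ^ 2 * ∑ i, y i ^ 2 := by
  rw [EuclideanSpace.norm_sq_eq, Finset.mul_sum]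
  refine Finset.sum_congr rfl fun i _ => ?_
  rw [Real.norm_eq_abs, sq_abs, hx, mul_pow, mul_pow, hσ, mul_one]

lemma EuclideanSpace.integral_apply {Ω : Type*} [MeasurableSpace Ω] {μ : Measure Ω}
    {Y : Ω → EuclideanSpace ℝ ι} (hY : Integrable Y μ) (i : ι) :
    (∫ ω, Y ω ∂μ) i = ∫ ω, Y ω i ∂μ :=
  ((EuclideanSpace.proj i).integral_comp_comm hY).symm

end Euclidean

section StochQuant

variable {n s : ℕ} {Ω : Type*} [MeasurableSpace Ω] {μ : Measure Ω}
  {w : EuclideanSpace ℝ (Fin n)} {Qw : Ω → EuclideanSpace ℝ (Fin n)}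

lemma sign_sq (x : ℝ) : (if 0 ≤ x then (1 : ℝ) else -1) ^ 2 = 1 := by
  split_ifs <;> norm_num

namespace IsStochQuant

lemma exists_isTwoPoint (hs : 1 ≤ s) (h : IsStochQuant s μ w Qw) :
    ∃ (ξ : Fin n → Ω → ℝ) (ℓ : Fin n → ℕ),
      (∀ i, IsTwoPoint μ (ξ i) (ℓ i / s) ((ℓ i + 1) / s) (|w i| / ‖w‖ * s - ℓ i)) ∧
      ∀ ω i, Qw ω i = ‖w‖ * (if 0 ≤ w i then (1 : ℝ) else -1) * ξ i ω := by
  obtain ⟨ξ, ℓ, hξ, -, -, hbr, hhi, hlo, hQ⟩ := h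
  exact ⟨ξ, ℓ, fun i => .of_grid (by positivity) (hξ i) (hbr i) (hhi i) (hlo i), hQ⟩

lemma measurable (hs : 1 ≤ s) (h : IsStochQuant s μ w Qw) : Measurable Qw := by
  obtain ⟨ξ, ℓ, hξ, hQ⟩ := h.exists_isTwoPoint hs
  refine (WithLp.measurable_toLp 2 _).comp (measurable_pi_iff.2 fun i => ?_)
  simpa only [hQ] using (hξ i).measurable.const_mul _

variable [IsProbabilityMeasure μ]

lemma integrable_norm_sq (hs : 1 ≤ s) (h : IsStochQuant s μ w Qw) :
    Integrable (fun ω => ‖Qw ω‖ ^ 2) μ := by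
  obtain ⟨ξ, ℓ, hξ, hQ⟩ := h.exists_isTwoPoint hs
  simp only [EuclideanSpace.norm_sq_eq_of_apply_eq_mul (fun i => sign_sq (w i)) (hQ _)]
  exact (integrable_finsetSum _ fun i _ => (hξ i).integrable_comp (· ^ 2)).const_mul _

lemma integrable (hs : 1 ≤ s) (h : IsStochQuant s μ w Qw) : Integrable Qw μ :=
  ((memLp_two_iff_integrable_sq_norm (h.measurable hs).aestronglyMeasurable).2
    (h.integrable_norm_sq hs)).integrable one_le_two

lemma integral_eq (hs : 1 ≤ s) (h : IsStochQuant s μ w Qw) : ∫ ω, Qw ω ∂μ = w := by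
  obtain ⟨ξ, ℓ, hξ, hQ⟩ := h.exists_isTwoPoint hs
  ext i
  simp only [EuclideanSpace.integral_apply (h.integrable hs), hQ, integral_const_mul,
    (hξ i).integral_eq_of_grid (by positivity)]
  rcases eq_or_ne w 0 with rfl | hw
  · simp
  have hw' : ‖w‖ ≠ 0 := norm_ne_zero_iff.2 hw
  split_ifs with hwi
  · rw [abs_of_nonneg hwi]; field_simp
  · rw [abs_of_neg (not_le.1 hwi)]; field_simp

lemma integral_norm_sq_le (hs : 1 ≤ s) (h : IsStochQuant s μ w Qw) :
    ∫ ω, ‖Qw ω‖ ^ 2 ∂μ ≤ (1 + min ((n : ℝ) / s ^ 2) (Real.sqrt n / s)) * ‖w‖ ^ 2 := by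
  obtain ⟨ξ, ℓ, hξ, hQ⟩ := h.exists_isTwoPoint hs
  set a : Fin n → ℝ := fun i => |w i| / ‖w‖
  have hsum_sq : ∑ i, a i ^ 2 ≤ 1 := by
    simp only [a, div_pow, sq_abs, ← Finset.sum_div]
    refine div_le_one_of_le₀ (le_of_eq ?_) (sq_nonneg _)
    simp [EuclideanSpace.norm_sq_eq]
  have hsum : ∑ i, a i ≤ Real.sqrt n := by
    rw [← Finset.sum_div]
    exact div_le_of_le_mul₀ (norm_nonneg _) (Real.sqrt_nonneg _)
      (by simpa using EuclideanSpace.sum_abs_le_sqrt_card_mul_norm w)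
  have hmoment : ∑ i, ∫ ω, ξ i ω ^ 2 ∂μ ≤ 1 + min ((n : ℝ) / s ^ 2) (Real.sqrt n / s) :=
    calc ∑ i, ∫ ω, ξ i ω ^ 2 ∂μ ≤ ∑ i, (a i ^ 2 + min (1 / (s : ℝ) ^ 2) (a i / s)) :=
          Finset.sum_le_sum fun i _ =>
            (hξ i).integral_sq_le_of_grid (by positivity) (Nat.cast_nonneg _)
      _ ≤ 1 + min ((n : ℝ) / s ^ 2) (Real.sqrt n / s) := by
          rw [Finset.sum_add_distrib]
          refine add_le_add hsum_sq (le_min ?_ ?_)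
          · refine (Finset.sum_le_sum fun i _ => min_le_left _ _).trans_eq ?_
            simp [div_eq_mul_inv]
          · refine (Finset.sum_le_sum fun i _ => min_le_right _ _).trans ?_
            rw [← Finset.sum_div]
            gcongr
  simp only [EuclideanSpace.norm_sq_eq_of_apply_eq_mul (fun i => sign_sq (w i)) (hQ _)]
  rw [integral_const_mul, integral_finsetSum _ fun i _ => (hξ i).integrable_comp (· ^ 2),
    mul_comm]
  gcongr

end IsStochQuant

end StochQuant

section Hilbert

variable {E : Type*} [NormedAddCommGroup E] [InnerProductSpace ℝ E] [CompleteSpace E]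
  {α : Type*} [MeasurableSpace α] {ν : Measure α} [IsProbabilityMeasure ν] {Y : α → E}

lemma integral_norm_sub_integral_sq (hY : MemLp Y 2 ν) :
    ∫ a, ‖Y a - ∫ b, Y b ∂ν‖ ^ 2 ∂ν = ∫ a, ‖Y a‖ ^ 2 ∂ν - ‖∫ a, Y a ∂ν‖ ^ 2 := by
  set m := ∫ a, Y a ∂ν
  have hsq : Integrable (fun a => ‖Y a‖ ^ 2) ν :=
    (memLp_two_iff_integrable_sq_norm hY.aestronglyMeasurable).1 hY
  have hinner : Integrable (fun a => 2 * inner ℝ m (Y a)) ν :=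
    ((innerSL ℝ m).integrable_comp (hY.integrable one_le_two)).const_mul 2
  have hdiff : Integrable (fun a => ‖Y a‖ ^ 2 - 2 * inner ℝ m (Y a)) ν := hsq.sub hinner
  simp only [norm_sub_sq_real, real_inner_comm m]
  rw [integral_add hdiff (integrable_const _), integral_sub hsq hinner,
    integral_const_mul, integral_inner (hY.integrable one_le_two), real_inner_self_eq_norm_sq]
  simp only [integral_const, probReal_univ, one_smul]
  ring

end Hilbert

section ProductSpace

variable {E : Type*} [NormedAddCommGroup E]
  {Ω Ω' : Type*} [MeasurableSpace Ω] [MeasurableSpace Ω'] {μ : Measure Ω} {μ' : Measure Ω'}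
  [SFinite μ'] {g : Ω → E} {Q : E → Ω' → E} {C : ℝ}

lemma integrable_norm_sq_comp_prod (hg : MemLp g 2 μ)
    (hY : AEStronglyMeasurable (fun p : Ω × Ω' => Q (g p.1) p.2) (μ.prod μ'))
    (hQ : ∀ w, Integrable (fun ω' => ‖Q w ω'‖ ^ 2) μ')
    (hQC : ∀ w, ∫ ω', ‖Q w ω'‖ ^ 2 ∂μ' ≤ C * ‖w‖ ^ 2) :
    Integrable (fun p : Ω × Ω' => ‖Q (g p.1) p.2‖ ^ 2) (μ.prod μ') := by
  have hg2 : Integrable (fun ω => ‖g ω‖ ^ 2) μ :=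
    (memLp_two_iff_integrable_sq_norm hg.aestronglyMeasurable).1 hg
  have hY2 : AEStronglyMeasurable (fun p : Ω × Ω' => ‖Q (g p.1) p.2‖ ^ 2) (μ.prod μ') :=
    hY.norm.pow 2
  refine (integrable_prod_iff hY2).2 ⟨.of_forall fun ω => hQ (g ω), ?_⟩
  refine (hg2.const_mul C).mono' hY2.norm.integral_prod_right' (.of_forall fun ω => ?_)
  simp only [norm_pow, norm_norm]
  rw [Real.norm_of_nonneg (integral_nonneg fun _ => by positivity)]
  exact hQC (g ω)

variable [SFinite μ]

lemma integral_norm_sq_comp_prod_le (hg : MemLp g 2 μ)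
    (hY : AEStronglyMeasurable (fun p : Ω × Ω' => Q (g p.1) p.2) (μ.prod μ'))
    (hQ : ∀ w, Integrable (fun ω' => ‖Q w ω'‖ ^ 2) μ')
    (hQC : ∀ w, ∫ ω', ‖Q w ω'‖ ^ 2 ∂μ' ≤ C * ‖w‖ ^ 2) :
    ∫ p, ‖Q (g p.1) p.2‖ ^ 2 ∂(μ.prod μ') ≤ C * ∫ ω, ‖g ω‖ ^ 2 ∂μ := by
  rw [integral_prod _ (integrable_norm_sq_comp_prod hg hY hQ hQC), ← integral_const_mul]
  exact integral_mono_of_nonneg (.of_forall fun _ => integral_nonneg fun _ => by positivity)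
    (((memLp_two_iff_integrable_sq_norm hg.aestronglyMeasurable).1 hg).const_mul C)
    (.of_forall fun ω => hQC (g ω))

lemma integral_comp_prod [NormedSpace ℝ E]
    (hY : Integrable (fun p : Ω × Ω' => Q (g p.1) p.2) (μ.prod μ'))
    (hQ : ∀ w, ∫ ω', Q w ω' ∂μ' = w) :
    ∫ p, Q (g p.1) p.2 ∂(μ.prod μ') = ∫ ω, g ω ∂μ := by
  rw [integral_prod _ hY]
  simp only [hQ]

end ProductSpace

theorem stochQuant_of_stochastic_gradient_general {n : ℕ} (s : ℕ) (hs : 1 ≤ s)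
    (B : ℝ)
    (f : EuclideanSpace ℝ (Fin n) → ℝ) (x : EuclideanSpace ℝ (Fin n))
    {Ω Ω' : Type*} [MeasurableSpace Ω] [MeasurableSpace Ω']
    (μ : Measure Ω) [IsProbabilityMeasure μ] (μ' : Measure Ω') [IsProbabilityMeasure μ']
    (g : Ω → EuclideanSpace ℝ (Fin n)) (hgL2 : MemLp g 2 μ)
    (hgmean : ∫ ω, g ω ∂μ = gradient f x)
    (hgmom : ∫ ω, ‖g ω‖ ^ 2 ∂μ ≤ B)
    (Q : EuclideanSpace ℝ (Fin n) → Ω' → EuclideanSpace ℝ (Fin n))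
    (hQmeas : Measurable (fun p : Ω × Ω' => Q (g p.1) p.2))
    (hQzero : ∀ ω', Q 0 ω' = 0)
    (hQdist : ∀ w : EuclideanSpace ℝ (Fin n), w ≠ 0 → IsStochQuant s μ' w (Q w)) :
    (∫ p, Q (g p.1) p.2 ∂(μ.prod μ') = gradient f x) ∧
    (∫ p, ‖Q (g p.1) p.2 - gradient f x‖ ^ 2 ∂(μ.prod μ') ≤
      (1 + min ((n : ℝ) / s ^ 2) (Real.sqrt n / s)) * B) := by
  set C := 1 + min ((n : ℝ) / s ^ 2) (Real.sqrt n / s)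
  have hQ : ∀ w, Integrable (fun ω' => ‖Q w ω'‖ ^ 2) μ' ∧ ∫ ω', Q w ω' ∂μ' = w ∧
      ∫ ω', ‖Q w ω'‖ ^ 2 ∂μ' ≤ C * ‖w‖ ^ 2 := by
    intro w
    rcases eq_or_ne w 0 with rfl | hw
    · simp [hQzero]
    · have h := hQdist w hw
      exact ⟨h.integrable_norm_sq hs, h.integral_eq hs, h.integral_norm_sq_le hs⟩
  have hY : AEStronglyMeasurable _ (μ.prod μ') := hQmeas.aestronglyMeasurable
  have hYL2 : MemLp (fun p : Ω × Ω' => Q (g p.1) p.2) 2 (μ.prod μ') :=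
    (memLp_two_iff_integrable_sq_norm hY).2
      (integrable_norm_sq_comp_prod hgL2 hY (fun w => (hQ w).1) fun w => (hQ w).2.2)
  have hmean : ∫ p, Q (g p.1) p.2 ∂(μ.prod μ') = gradient f x :=
    (integral_comp_prod (hYL2.integrable one_le_two) fun w => (hQ w).2.1).trans hgmean
  refine ⟨hmean, ?_⟩
  rw [← hmean, integral_norm_sub_integral_sq hYL2]
  calc _ ≤ ∫ p, ‖Q (g p.1) p.2‖ ^ 2 ∂(μ.prod μ') := sub_le_self _ (sq_nonneg _)
    _ ≤ C * ∫ ω, ‖g ω‖ ^ 2 ∂μ :=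
      integral_norm_sq_comp_prod_le hgL2 hY (fun w => (hQ w).1) fun w => (hQ w).2.2
    _ ≤ C * B := by gcongr

/-- **Quantization of a stochastic gradient is a stochastic gradient.**
If `g` is a stochastic gradient for `f` at `x` with second moment bound `B`, and
`Q` applies the stochastic quantization `Q_s` with fresh randomness independent of
`g` (modelled by the product space `Ω × Ω'`), then `Q(g)` has mean `∇f(x)` and
variance at most `(1 + min(n/s², √n/s)) · B`; in particular it is again a
stochastic gradient for `f` at `x`. -/
theorem stochQuant_of_stochastic_gradient {n : ℕ} (hn : 1 ≤ n) (s : ℕ) (hs : 1 ≤ s)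
    (B : ℝ) (hB : 0 < B)
    (f : EuclideanSpace ℝ (Fin n) → ℝ) (x : EuclideanSpace ℝ (Fin n))
    (hf : DifferentiableAt ℝ f x)
    {Ω Ω' : Type*} [MeasurableSpace Ω] [MeasurableSpace Ω']
    (μ : Measure Ω) [IsProbabilityMeasure μ] (μ' : Measure Ω') [IsProbabilityMeasure μ']
    (g : Ω → EuclideanSpace ℝ (Fin n)) (hgmeas : Measurable g) (hgL2 : MemLp g 2 μ)
    (hgmean : ∫ ω, g ω ∂μ = gradient f x)
    (hgmom : ∫ ω, ‖g ω‖ ^ 2 ∂μ ≤ B)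
    (Q : EuclideanSpace ℝ (Fin n) → Ω' → EuclideanSpace ℝ (Fin n))
    (hQmeas : Measurable (fun p : Ω × Ω' => Q (g p.1) p.2))
    (hQzero : ∀ ω', Q 0 ω' = 0)
    (hQdist : ∀ w : EuclideanSpace ℝ (Fin n), w ≠ 0 → IsStochQuant s μ' w (Q w)) :
    (∫ p, Q (g p.1) p.2 ∂(μ.prod μ') = gradient f x) ∧
    (∫ p, ‖Q (g p.1) p.2 - gradient f x‖ ^ 2 ∂(μ.prod μ') ≤
      (1 + min ((n : ℝ) / s ^ 2) (Real.sqrt n / s)) * B) :=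
  stochQuant_of_stochastic_gradient_general s hs B f x μ μ' g hgL2 hgmean hgmom Q hQmeas hQzero
    hQdist
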